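/- Let δ: L₁ → L₂ be a branched covering of finite laminations on the circle C = ℝ/2πℤ of degree d. Suppose L₁ has a rotational symmetry of order k, i.e. the rotation of C by angle 2π/k carries every L₁-class onto an L₁-class. Then the rotation of C by angle 2π·d/k carries every L₂-class onto an L₂-class, and this rotation has order k/gcd(k,d) in the rotation group of C; in particular L₂ has a rotational symmetry of order k/gcd(k,d). -/

import Mathlib

open Set MeasureTheory Filter Topology

noncomputable section

/-- The circle `ℝ/2πℤ`. -/
abbrev Circle2pi : Type := AddCircle (2 * Real.pi)

instance : Fact ((0 : ℝ) < 2 * Real.pi) := ⟨by positivity⟩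

/-- A finite lamination on the circle `ℝ/2πℤ`: an equivalence relation whose classes are
finite, all but finitely many of which are singletons, and whose distinct classes are
unlinked (equivalent pairs from distinct classes lie in a common connected component of the
complement of the other pair). -/
structure FiniteLamination where
  rel : Circle2pi → Circle2pi → Prop
  iseqv : Equivalence rel
  class_finite : ∀ x, {y | rel x y}.Finite
  nontrivial_finite : {x | ∃ y, rel x y ∧ y ≠ x}.Finite
  unlinked : ∀ a b c d : Circle2pi, rel a b → rel c d → ¬ rel a c → a ≠ b → c ≠ d →
    b ∈ connectedComponentIn ({c, d}ᶜ : Set Circle2pi) a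

/-- The equivalence class of `x` under the lamination `L`. -/
def FiniteLamination.cls (L : FiniteLamination) (x : Circle2pi) : Set Circle2pi :=
  {y | L.rel x y}

/-- `a` and `b` are adjacent (consecutive) in the cyclic order of the set `A`:
both belong to `A`, are distinct, and one of the two open arcs bounded by `a` and `b`
(i.e. one of the connected components of the complement of `{a, b}`) contains no point of `A`. -/
def AdjacentIn (A : Set Circle2pi) (a b : Circle2pi) : Prop :=
  a ∈ A ∧ b ∈ A ∧ a ≠ b ∧
    ∃ x ∈ ({a, b}ᶜ : Set Circle2pi),
      connectedComponentIn ({a, b}ᶜ : Set Circle2pi) x ∩ A = ∅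

/-- A branched covering of finite laminations: an affine degree `d ≥ 1` map
`t ↦ d • t + c` of the circle carrying each `L₁`-class exactly onto an `L₂`-class and
preserving consecutivity of points of a class whenever the image class is nontrivial. -/
structure LamBranchedCover (L₁ L₂ : FiniteLamination) where
  deg : ℕ
  deg_pos : 1 ≤ deg
  shift : Circle2pi
  maps_cls : ∀ x : Circle2pi,
    (fun t => deg • t + shift) '' L₁.cls x = L₂.cls (deg • x + shift)
  consecutive : ∀ x a b : Circle2pi,
    ¬ ((fun t => deg • t + shift) '' L₁.cls x).Subsingleton →
    AdjacentIn (L₁.cls x) a b →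
    AdjacentIn ((fun t => deg • t + shift) '' L₁.cls x) (deg • a + shift) (deg • b + shift)

/-- The underlying circle map of a branched covering of laminations. -/
def LamBranchedCover.map {L₁ L₂ : FiniteLamination} (δ : LamBranchedCover L₁ L₂) :
    Circle2pi → Circle2pi := fun t => δ.deg • t + δ.shift

/-- The set `S` is unlinked with every pair of `L`-equivalent points lying in a
nontrivial class. -/
def UnlinkedSet (L : FiniteLamination) (S : Set Circle2pi) : Prop :=
  ∀ a ∈ S, ∀ b ∈ S, ∀ c d : Circle2pi, L.rel c d → c ≠ d →
    b ∈ connectedComponentIn ({c, d}ᶜ : Set Circle2pi) a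

/-- A gap of the lamination `L`: a maximal open subset of the circle every pair of whose
points is unlinked with every pair of `L`-equivalent points in a nontrivial class. -/
def IsGapOf (L : FiniteLamination) (G : Set Circle2pi) : Prop :=
  IsOpen G ∧ G.Nonempty ∧ UnlinkedSet L G ∧
    ∀ G' : Set Circle2pi, IsOpen G' → UnlinkedSet L G' → G ⊆ G' → G = G'

theorem AddCircle.addOrderOf_nsmul_period_div {𝕜 : Type*} [Field 𝕜] [LinearOrder 𝕜]
    [IsStrictOrderedRing 𝕜] {p : 𝕜} [Fact (0 < p)] (d : ℕ) {k : ℕ} (hk : 0 < k) :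
    addOrderOf (d • ((p / k : 𝕜) : AddCircle p)) = k / k.gcd d := by
  have hord : addOrderOf ((p / k : 𝕜) : AddCircle p) = k := AddCircle.addOrderOf_period_div hk
  rw [(addOrderOf_pos_iff.mp (by rwa [hord])).addOrderOf_nsmul, hord]

namespace FiniteLamination

def IsRotationSymmetry (L : FiniteLamination) (a : Circle2pi) : Prop :=
  ∀ x, (fun t => t + a) '' L.cls x = L.cls (x + a)

end FiniteLamination

namespace LamBranchedCover

variable {L₁ L₂ : FiniteLamination} (δ : LamBranchedCover L₁ L₂)

theorem image_cls (x : Circle2pi) : δ.map '' L₁.cls x = L₂.cls (δ.map x) :=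
  δ.maps_cls x

theorem map_add (t a : Circle2pi) : δ.map (t + a) = δ.map t + δ.deg • a := by
  simp only [map, smul_add]
  abel

theorem map_surjective : Function.Surjective δ.map := by
  intro y
  have hdeg : (δ.deg : ℤ) ≠ 0 := by exact_mod_cast Nat.pos_iff_ne_zero.mp δ.deg_pos
  refine ⟨DivisibleBy.div (y - δ.shift) (δ.deg : ℤ), ?_⟩
  rw [map, ← natCast_zsmul, DivisibleBy.div_cancel _ hdeg, sub_add_cancel]

/-- `δ` is onto, so every `L₂`-class is the image of an `L₁`-class, and `δ` intertwines rotation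
by `a` with rotation by `deg • a`. -/
theorem isRotationSymmetry_nsmul {a : Circle2pi} (h : L₁.IsRotationSymmetry a) :
    L₂.IsRotationSymmetry (δ.deg • a) := by
  intro y
  obtain ⟨x, rfl⟩ := δ.map_surjective y
  have hcomm : (fun t => t + δ.deg • a) ∘ δ.map = δ.map ∘ (fun t => t + a) :=
    funext fun t => (δ.map_add t a).symm
  rw [← δ.image_cls, ← image_comp, hcomm, image_comp, h x, δ.image_cls, δ.map_add]

end LamBranchedCover

/-- If `δ : L₁ → L₂` is a branched covering of degree `d` and `L₁` has a
rotational symmetry of order `k` (rotation by `2π/k` carries `L₁`-classes onto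
`L₁`-classes), then rotation by `2πd/k` carries `L₂`-classes onto `L₂`-classes, and
this rotation has order `k / gcd(k, d)` in the rotation group of the circle; in
particular `L₂` has a rotational symmetry of order `k / gcd(k, d)`. -/
theorem lamination_symmetry_order_under_cover
    (L₁ L₂ : FiniteLamination) (δ : LamBranchedCover L₁ L₂)
    (k : ℕ) (hk : 0 < k)
    (hsym : ∀ x : Circle2pi,
      (fun t => t + ((2 * Real.pi / k : ℝ) : Circle2pi)) '' L₁.cls x
        = L₁.cls (x + ((2 * Real.pi / k : ℝ) : Circle2pi))) :
    (∀ y : Circle2pi,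
      (fun t => t + ((2 * Real.pi * δ.deg / k : ℝ) : Circle2pi)) '' L₂.cls y
        = L₂.cls (y + ((2 * Real.pi * δ.deg / k : ℝ) : Circle2pi))) ∧
      addOrderOf (((2 * Real.pi * δ.deg / k : ℝ) : Circle2pi)) = k / Nat.gcd k δ.deg := by
  have hrot : ((2 * Real.pi * δ.deg / k : ℝ) : Circle2pi)
      = δ.deg • ((2 * Real.pi / k : ℝ) : Circle2pi) := by
    rw [← AddCircle.coe_nsmul, nsmul_eq_mul, mul_div_assoc, mul_div_left_comm]
  rw [hrot]
  exact ⟨δ.isRotationSymmetry_nsmul hsym, AddCircle.addOrderOf_nsmul_period_div _ hk⟩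

end
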